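/- For every integer k ≥ 2, the polynomial A(x) = x^k - x^{k-1} - ... - 1 has exactly one positive real root ζ₀, and it satisfies 2 - 2^{-(k-1)} < ζ₀ < 2 - 2^{-k}. -/

import Mathlib

/-!
Multiplying `A(x) = x^k - ∑_{j<k} x^j` by `x - 1` gives `x^k (x - 2) + 1`, so for `x > 1` the sign
of `A(x)` is that of `1 - x^k (2 - x)`. At `x = 2 - 2^{-k}` this is `1 - (x/2)^k > 0`; at
`x = 2 - 2^{-(k-1)}` it is `1 - 2 (1 - 2^{-k})^k`, which is negative because the strict Bernoulli
inequality gives `(1 - 2^{-k})^k > 1 - k 2^{-k} ≥ 1/2`. The intermediate value theorem yields a root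
in between. It is the only positive root since `A(x) = x^k (1 - ∑_{i=1}^k x^{-i})` for `x ≠ 0`, and
the sum is strictly decreasing on `(0, ∞)`.
-/

open Polynomial Finset

lemma sub_one_mul_pow_sub_geom_sum {R : Type*} [CommRing R] (x : R) (k : ℕ) :
    (x - 1) * (x ^ k - ∑ j ∈ range k, x ^ j) = x ^ k * (x - 2) + 1 := by
  rw [mul_sub, mul_geom_sum]
  ring

lemma pow_sub_geom_sum_eq_pow_mul {K : Type*} [Field K] {x : K} (hx : x ≠ 0) (k : ℕ) :
    x ^ k - ∑ j ∈ range k, x ^ j = x ^ k * (1 - ∑ i ∈ range k, x⁻¹ ^ (i + 1)) := by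
  rw [mul_sub, mul_one, mul_sum, ← sum_range_reflect (fun j => x ^ j) k]
  congr 1
  refine sum_congr rfl fun i hi => ?_
  rw [mem_range] at hi
  rw [inv_pow, ← div_eq_mul_inv, eq_div_iff (pow_ne_zero _ hx), ← pow_add]
  congr 1
  omega

lemma strictAntiOn_sum_inv_pow {k : ℕ} (hk : k ≠ 0) :
    StrictAntiOn (fun x : ℝ => ∑ i ∈ range k, x⁻¹ ^ (i + 1)) (Set.Ioi 0) :=
  fun _ hx _ hy hxy => sum_lt_sum_of_nonempty (nonempty_range_iff.2 hk) fun i _ =>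
    pow_lt_pow_left₀ ((inv_lt_inv₀ hy hx).2 hxy) (inv_pos.2 hy).le (Nat.succ_ne_zero i)

lemma eq_of_pow_sub_geom_sum_eq_zero {k : ℕ} (hk : k ≠ 0) {x y : ℝ} (hx : 0 < x) (hy : 0 < y)
    (hfx : x ^ k - ∑ j ∈ range k, x ^ j = 0) (hfy : y ^ k - ∑ j ∈ range k, y ^ j = 0) :
    x = y := by
  have sum_eq_one {z : ℝ} (hz : 0 < z) (hfz : z ^ k - ∑ j ∈ range k, z ^ j = 0) :
      ∑ i ∈ range k, z⁻¹ ^ (i + 1) = 1 := by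
    rw [pow_sub_geom_sum_eq_pow_mul hz.ne', mul_eq_zero, sub_eq_zero] at hfz
    exact (hfz.resolve_left (pow_ne_zero _ hz.ne')).symm
  exact (strictAntiOn_sum_inv_pow hk).injOn hx hy
    ((sum_eq_one hx hfx).trans (sum_eq_one hy hfy).symm)

lemma pow_sub_geom_sum_pos {x : ℝ} (hx : 1 < x) {k : ℕ} (h : 0 < x ^ k * (x - 2) + 1) :
    0 < x ^ k - ∑ j ∈ range k, x ^ j :=
  pos_of_mul_pos_right (by rwa [sub_one_mul_pow_sub_geom_sum]) (sub_nonneg.2 hx.le)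

lemma pow_sub_geom_sum_neg {x : ℝ} (hx : 1 < x) {k : ℕ} (h : x ^ k * (x - 2) + 1 < 0) :
    x ^ k - ∑ j ∈ range k, x ^ j < 0 :=
  neg_of_mul_neg_right (by rwa [sub_one_mul_pow_sub_geom_sum]) (sub_nonneg.2 hx.le)

lemma one_lt_two_sub_one_div_two_pow {n : ℕ} (hn : n ≠ 0) : (1 : ℝ) < 2 - 1 / 2 ^ n := by
  have : (1 : ℝ) / 2 ^ n < 1 := (div_lt_one (by positivity)).2 (one_lt_pow₀ one_lt_two hn)
  linarith

lemma half_lt_one_sub_one_div_two_pow_pow {k : ℕ} (hk : 2 ≤ k) :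
    (1 : ℝ) / 2 < (1 - 1 / 2 ^ k) ^ k := by
  have bernoulli := one_add_mul_self_lt_rpow_one_add (s := -(1 / 2 ^ k)) (p := k)
    (by rw [neg_le_neg_iff]; exact div_le_one_of_le₀ (one_le_pow₀ one_le_two) (by positivity))
    (by simp) (by exact_mod_cast hk)
  rw [← sub_eq_add_neg, Real.rpow_natCast] at bernoulli
  obtain ⟨n, rfl⟩ : ∃ n, k = n + 1 := ⟨k - 1, by omega⟩
  have hn : (n + 1 : ℝ) ≤ 2 ^ n := by exact_mod_cast Nat.lt_two_pow_self
  have : (1 : ℝ) / 2 ≤ 1 + (n + 1 : ℕ) * -(1 / 2 ^ (n + 1)) := by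
    rw [pow_succ]
    field_simp
    push_cast
    linarith
  linarith

lemma pow_sub_geom_sum_two_sub_one_div_two_pow_pos {k : ℕ} (hk : k ≠ 0) :
    0 < (2 - 1 / 2 ^ k : ℝ) ^ k - ∑ j ∈ range k, (2 - 1 / 2 ^ k : ℝ) ^ j := by
  set b : ℝ := 2 - 1 / 2 ^ k with hb_def
  have hb : 1 < b := one_lt_two_sub_one_div_two_pow hk
  refine pow_sub_geom_sum_pos hb ?_
  have : (b / 2) ^ k < 1 :=
    pow_lt_one₀ (by linarith) (by linarith [show (0 : ℝ) < 1 / 2 ^ k by positivity]) hk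
  have key : b ^ k * (b - 2) + 1 = 1 - (b / 2) ^ k := by
    rw [hb_def, div_pow]
    ring
  linarith

lemma pow_sub_geom_sum_two_sub_one_div_two_pow_pred_neg {k : ℕ} (hk : 2 ≤ k) :
    (2 - 1 / 2 ^ (k - 1) : ℝ) ^ k - ∑ j ∈ range k, (2 - 1 / 2 ^ (k - 1) : ℝ) ^ j < 0 := by
  set a : ℝ := 2 - 1 / 2 ^ (k - 1) with ha_def
  have ha : 1 < a := one_lt_two_sub_one_div_two_pow (by omega)
  refine pow_sub_geom_sum_neg ha ?_
  have key : a ^ k * (a - 2) + 1 = 1 - 2 * (1 - 1 / 2 ^ k) ^ k := by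
    obtain ⟨n, rfl⟩ : ∃ n, k = n + 1 := ⟨k - 1, by omega⟩
    have ha2 : a = 2 * (1 - 1 / 2 ^ (n + 1)) := by
      rw [ha_def, Nat.add_sub_cancel, pow_succ]
      ring
    rw [ha2, mul_pow, pow_succ 2 n]
    field_simp
    ring
  linarith [half_lt_one_sub_one_div_two_pow_pow hk]

theorem stmt_4 (k : ℕ) (hk : 2 ≤ k) :
    ∃ ζ : ℝ, 0 < ζ ∧ ((X : Polynomial ℝ) ^ k - ∑ j ∈ range k, X ^ j).IsRoot ζ ∧
      (∀ x : ℝ, 0 < x → ((X : Polynomial ℝ) ^ k - ∑ j ∈ range k, X ^ j).IsRoot x → x = ζ) ∧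
      2 - 1 / 2 ^ (k - 1) < ζ ∧ ζ < 2 - 1 / 2 ^ k := by
  have isRoot_iff (x : ℝ) : ((X : ℝ[X]) ^ k - ∑ j ∈ range k, X ^ j).IsRoot x ↔
      x ^ k - ∑ j ∈ range k, x ^ j = 0 := by
    simp [IsRoot, eval_finsetSum]
  have endpoints_lt : (2 - 1 / 2 ^ (k - 1) : ℝ) < 2 - 1 / 2 ^ k :=
    sub_lt_sub_left (one_div_lt_one_div_of_lt (by positivity)
      (pow_lt_pow_right₀ one_lt_two (by omega))) 2
  have continuous_A : Continuous fun x : ℝ => x ^ k - ∑ j ∈ range k, x ^ j := by fun_prop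
  obtain ⟨ζ, ⟨hζ_lower, hζ_upper⟩, hζ⟩ := intermediate_value_Ioo endpoints_lt.le
    continuous_A.continuousOn ⟨pow_sub_geom_sum_two_sub_one_div_two_pow_pred_neg hk,
      pow_sub_geom_sum_two_sub_one_div_two_pow_pos (by omega)⟩
  have hζ_pos : 0 < ζ := by
    linarith [one_lt_two_sub_one_div_two_pow (n := k - 1) (by omega)]
  refine ⟨ζ, hζ_pos, (isRoot_iff ζ).2 hζ, fun x hx hx_root => ?_, hζ_lower, hζ_upper⟩
  exact eq_of_pow_sub_geom_sum_eq_zero (by omega) hx hζ_pos ((isRoot_iff x).1 hx_root) hζ
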